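/- In the setting of the previous context, with u(γ, y') = (∫_{D∖B} y γ e^{-γ y} dx dy) / Q(γ, y'), one has the two-sided bound 1/200 ≤ γ · u(γ, y') ≤ 8/(1 − e^{-1/2}) < 21 for all γ > 0, y' ≥ R. -/

import Mathlib

open MeasureTheory Real Set

/-- The region `D ∖ B((x̂,y'),R)` where `D = D_b × (0,∞)`. -/
def gasRegion {E : Type*} [NormedAddCommGroup E]
    (Db : Set E) (xh : E) (R y' : ℝ) : Set (E × ℝ) :=
  {p | p.1 ∈ Db ∧ 0 < p.2 ∧ R ^ 2 < ‖p.1 - xh‖ ^ 2 + (p.2 - y') ^ 2}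

/-- The mass `Q(γ,y') = ∫_{D∖B} γ e^{-γ y} dx dy`. -/
noncomputable def gasMass (d : ℕ) (Db : Set (EuclideanSpace ℝ (Fin (d - 1))))
    (xh : EuclideanSpace ℝ (Fin (d - 1))) (R y' γ : ℝ) : ℝ :=
  ∫ p in gasRegion Db xh R y', γ * exp (-γ * p.2)

/-- The mean height `u(γ,y') = (∫_{D∖B} y γ e^{-γ y} dx dy)/Q(γ,y')`. -/
noncomputable def gasMeanHeight (d : ℕ) (Db : Set (EuclideanSpace ℝ (Fin (d - 1))))
    (xh : EuclideanSpace ℝ (Fin (d - 1))) (R y' γ : ℝ) : ℝ :=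
  (∫ p in gasRegion Db xh R y', p.2 * (γ * exp (-γ * p.2))) / gasMass d Db xh R y' γ

/-!
Write `V = |D_b|` and `f(y) = γ e^{-γ y}`. Enlarging the region to `D_b × (0,∞)` gives
`γ ∫ y f ≤ V`. The mass satisfies `Q ≥ κ V` with `κ = (1 - e^{-1/2}) / 8`: if `γ y' ≤ 1`, the slab
`D_b × (y' + R, ∞)` carries mass `V e^{-γ (y' + R)} ≥ V e^{-2}`; if `γ y' ≥ 1`, the points of `D_b`
at distance more than `7R/8` from `x̂` (at least `V/8` of `D_b`, since `B(x̂,R) ⊆ D_b`) at heights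
below `y'/2` lie outside `B` and carry mass at least `(1 - e^{-1/2}) V / 8`. Hence
`γ u ≤ V / Q ≤ 1/κ`. Conversely the heights below `t/γ` carry mass at most `V t`, so
`γ ∫ y f ≥ t (Q - V t)`, and `t = κ/2` gives `γ u ≥ κ/4 ≥ 1/200`.
-/

open Metric

theorem exp_neg_half_lt : exp (-(1 / 2)) < 13 / 21 := by
  have hsq : exp (1 / 2) ^ 2 = exp 1 := by rw [← exp_nat_mul]; norm_num
  rw [exp_neg, inv_lt_comm₀ (exp_pos _) (by norm_num)]
  nlinarith [exp_one_gt_d9, exp_pos (1 / 2)]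

theorem exp_neg_half_le : exp (-(1 / 2)) ≤ 2 / 3 := by
  rw [exp_neg, inv_le_comm₀ (exp_pos _) (by norm_num)]
  linarith [add_one_le_exp (1 / 2 : ℝ)]

theorem one_div_sixteen_le_exp_neg_two : 1 / 16 ≤ exp (-2) := by
  have hsq : exp 1 ^ 2 = exp 2 := by rw [← exp_nat_mul]; norm_num
  rw [exp_neg, ← one_div]
  exact one_div_le_one_div_of_le (exp_pos 2) (by nlinarith [exp_one_lt_three, exp_pos 1])

theorem integral_Ioi_mul_exp_neg_mul {γ : ℝ} (hγ : 0 < γ) (a : ℝ) :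
    ∫ y in Ioi a, γ * exp (-γ * y) = exp (-γ * a) := by
  rw [integral_const_mul, integral_exp_mul_Ioi (neg_lt_zero.2 hγ)]
  field_simp

theorem integral_Ioo_mul_exp_neg_mul {γ b : ℝ} (hb : 0 ≤ b) :
    ∫ y in Ioo 0 b, γ * exp (-γ * y) = 1 - exp (-γ * b) := by
  rw [← integral_Ioc_eq_integral_Ioo, ← intervalIntegral.integral_of_le hb,
    intervalIntegral.integral_eq_sub_of_hasDerivAt (f := fun y => -exp (-γ * y))]
  · simp only [mul_zero, exp_zero]
    ring
  · exact fun y _ => (((hasDerivAt_id' y).const_mul (-γ)).exp.fun_neg).congr_deriv (by ring)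
  · exact (by fun_prop : Continuous fun y => γ * exp (-γ * y)).intervalIntegrable _ _

theorem integral_Ioi_mul_mul_exp_neg_mul {γ : ℝ} (hγ : 0 < γ) :
    ∫ y in Ioi 0, y * (γ * exp (-γ * y)) = 1 / γ :=
  calc ∫ y in Ioi 0, y * (γ * exp (-γ * y))
      = γ * ∫ y in Ioi 0, y ^ ((2 : ℝ) - 1) * exp (-(γ * y)) := by
        rw [← integral_const_mul]
        refine setIntegral_congr_fun measurableSet_Ioi fun y _ => ?_
        norm_num
        ring
    _ = 1 / γ := by
        rw [integral_rpow_mul_exp_neg_mul_Ioi two_pos hγ, Gamma_two, rpow_two]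
        field_simp

theorem integrableOn_Ioi_mul_exp_neg_mul {γ : ℝ} (hγ : 0 < γ) (a : ℝ) :
    IntegrableOn (fun y => γ * exp (-γ * y)) (Ioi a) :=
  (exp_neg_integrableOn_Ioi a hγ).const_mul γ

theorem integrableOn_Ioi_mul_mul_exp_neg_mul {γ : ℝ} (hγ : 0 < γ) :
    IntegrableOn (fun y => y * (γ * exp (-γ * y))) (Ioi 0) :=
  Integrable.of_integral_ne_zero (by rw [integral_Ioi_mul_mul_exp_neg_mul hγ]; positivity)

section Product

variable {E : Type*} [MeasureSpace E] [SigmaFinite (volume : Measure E)]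

theorem setIntegral_prod_comp_snd (s : Set E) (t : Set ℝ) (h : ℝ → ℝ) :
    ∫ p in s ×ˢ t, h p.2 = volume.real s * ∫ y in t, h y := by
  simpa [Measure.volume_eq_prod, measureReal_def] using
    setIntegral_prod_mul (fun _ : E => (1 : ℝ)) h s t

theorem MeasureTheory.IntegrableOn.comp_snd_prod {s : Set E} (hs : volume s ≠ ⊤) {t : Set ℝ}
    {h : ℝ → ℝ} (hh : IntegrableOn h t) : IntegrableOn (fun p : E × ℝ => h p.2) (s ×ˢ t) := by
  have : IsFiniteMeasure (volume.restrict s) := isFiniteMeasure_restrict.2 hs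
  rw [IntegrableOn, Measure.volume_eq_prod, ← Measure.prod_restrict]
  exact hh.comp_snd _

variable {γ : ℝ} {S : Set E} {A : Set (E × ℝ)}

theorem setIntegral_mul_exp_neg_mul_mono_set (hγ : 0 < γ) (hS : volume S ≠ ⊤) {T : Set (E × ℝ)}
    (hTA : T ⊆ A) (hA : A ⊆ S ×ˢ Ioi 0) :
    ∫ p in T, γ * exp (-γ * p.2) ≤ ∫ p in A, γ * exp (-γ * p.2) :=
  setIntegral_mono_set (((integrableOn_Ioi_mul_exp_neg_mul hγ 0).comp_snd_prod hS).mono_set hA)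
    (ae_of_all _ fun _ => by positivity) hTA.eventuallyLE

theorem mul_setIntegral_snd_mul_le (hγ : 0 < γ) (hS : volume S ≠ ⊤) (hA : A ⊆ S ×ˢ Ioi 0) :
    γ * ∫ p in A, p.2 * (γ * exp (-γ * p.2)) ≤ volume.real S := by
  have hnonneg : 0 ≤ᵐ[volume.restrict (S ×ˢ Ioi 0)] fun p : E × ℝ => p.2 * (γ * exp (-γ * p.2)) :=
    ae_restrict_of_ae_restrict_of_subset (prod_subset_preimage_snd S _)
      (ae_restrict_of_forall_mem (measurable_snd measurableSet_Ioi)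
        fun p (hp : 0 < p.2) => by positivity)
  calc γ * ∫ p in A, p.2 * (γ * exp (-γ * p.2))
      ≤ γ * ∫ p in S ×ˢ Ioi 0, p.2 * (γ * exp (-γ * p.2)) := by
        refine mul_le_mul_of_nonneg_left ?_ hγ.le
        exact setIntegral_mono_set ((integrableOn_Ioi_mul_mul_exp_neg_mul hγ).comp_snd_prod hS)
          hnonneg hA.eventuallyLE
    _ = volume.real S := by
        rw [setIntegral_prod_comp_snd S _ fun y => y * (γ * exp (-γ * y)),
          integral_Ioi_mul_mul_exp_neg_mul hγ]
        field_simp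

theorem mul_sub_le_mul_setIntegral_snd_mul (hγ : 0 < γ) (hS : volume S ≠ ⊤)
    (hAm : MeasurableSet A) (hA : A ⊆ S ×ˢ Ioi 0) {t : ℝ} (ht : 0 ≤ t) :
    t * ((∫ p in A, γ * exp (-γ * p.2)) - volume.real S * t)
      ≤ γ * ∫ p in A, p.2 * (γ * exp (-γ * p.2)) := by
  set b := t / γ
  have hb : 0 ≤ b := by positivity
  have hγb : γ * b = t := mul_div_cancel₀ t hγ.ne'
  have hlow : MeasurableSet {p : E × ℝ | p.2 < b} :=
    measurableSet_lt measurable_snd measurable_const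
  have hf : IntegrableOn (fun p : E × ℝ => γ * exp (-γ * p.2)) A :=
    ((integrableOn_Ioi_mul_exp_neg_mul hγ 0).comp_snd_prod hS).mono_set hA
  have hg : IntegrableOn (fun p : E × ℝ => p.2 * (γ * exp (-γ * p.2))) A :=
    ((integrableOn_Ioi_mul_mul_exp_neg_mul hγ).comp_snd_prod hS).mono_set hA
  have hsmall : ∫ p in A ∩ {p | p.2 < b}, γ * exp (-γ * p.2) ≤ volume.real S * t :=
    calc ∫ p in A ∩ {p | p.2 < b}, γ * exp (-γ * p.2)
        ≤ ∫ p in S ×ˢ Ioo 0 b, γ * exp (-γ * p.2) :=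
          setIntegral_mul_exp_neg_mul_mono_set hγ hS
            (fun p hp => ⟨(hA hp.1).1, (hA hp.1).2, hp.2⟩) (prod_mono_right Ioo_subset_Ioi_self)
      _ = volume.real S * (1 - exp (-(γ * b))) := by
          rw [setIntegral_prod_comp_snd S _ fun y => γ * exp (-γ * y),
            integral_Ioo_mul_exp_neg_mul hb, neg_mul]
      _ ≤ volume.real S * t := by
          gcongr
          linarith [one_sub_le_exp_neg (γ * b)]
  have htall : b * ∫ p in A \ {p | p.2 < b}, γ * exp (-γ * p.2)
      ≤ ∫ p in A, p.2 * (γ * exp (-γ * p.2)) :=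
    calc b * ∫ p in A \ {p | p.2 < b}, γ * exp (-γ * p.2)
        = ∫ p in A \ {p | p.2 < b}, b * (γ * exp (-γ * p.2)) := (integral_const_mul _ _).symm
      _ ≤ ∫ p in A \ {p | p.2 < b}, p.2 * (γ * exp (-γ * p.2)) :=
          setIntegral_mono_on ((hf.mono_set sdiff_subset).const_mul b) (hg.mono_set sdiff_subset)
            (hAm.diff hlow) fun p hp => mul_le_mul_of_nonneg_right (not_lt.1 hp.2) (by positivity)
      _ ≤ ∫ p in A, p.2 * (γ * exp (-γ * p.2)) :=
          setIntegral_mono_set hg (ae_restrict_of_forall_mem hAm fun p hp =>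
            mul_nonneg (le_of_lt (hA hp).2) (by positivity)) sdiff_subset.eventuallyLE
  have htall' := mul_le_mul_of_nonneg_left htall hγ.le
  rw [← mul_assoc, hγb] at htall'
  rw [← integral_inter_add_sdiff hlow hf]
  nlinarith [mul_le_mul_of_nonneg_left hsmall ht]
  
end Product

theorem MeasureTheory.Measure.addHaar_closedBall_mul_le {E : Type*} [NormedAddCommGroup E]
    [NormedSpace ℝ E] [MeasurableSpace E] [BorelSpace E] [FiniteDimensional ℝ E] [Nontrivial E]
    (μ : Measure E) [μ.IsAddHaarMeasure] (x : E) {c r : ℝ} (hc₀ : 0 ≤ c) (hc₁ : c ≤ 1)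
    (hr : 0 ≤ r) : μ (closedBall x (c * r)) ≤ ENNReal.ofReal c * μ (ball x r) := by
  rw [Measure.addHaar_closedBall μ x (mul_nonneg hc₀ hr), Measure.addHaar_ball μ x hr, mul_pow,
    ENNReal.ofReal_mul (by positivity), mul_assoc]
  gcongr
  exact pow_le_of_le_one hc₀ hc₁ Module.finrank_pos.ne'

theorem MeasureTheory.Measure.mul_measureReal_le_measureReal_sdiff_closedBall {E : Type*}
    [NormedAddCommGroup E] [NormedSpace ℝ E] [MeasurableSpace E] [BorelSpace E]
    [FiniteDimensional ℝ E] [Nontrivial E] (μ : Measure E) [μ.IsAddHaarMeasure] {s : Set E}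
    (hs : μ s ≠ ⊤) {x : E} {c r : ℝ} (hc₀ : 0 ≤ c) (hc₁ : c ≤ 1) (hr : 0 ≤ r)
    (hball : ball x r ⊆ s) : (1 - c) * μ.real s ≤ μ.real (s \ closedBall x (c * r)) := by
  have hclosedBall : μ.real (closedBall x (c * r)) ≤ c * μ.real s :=
    calc μ.real (closedBall x (c * r))
        ≤ (ENNReal.ofReal c * μ (ball x r)).toReal :=
          ENNReal.toReal_mono (ENNReal.mul_ne_top ENNReal.ofReal_ne_top measure_ball_lt_top.ne)
            (μ.addHaar_closedBall_mul_le x hc₀ hc₁ hr)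
      _ = c * μ.real (ball x r) := by rw [ENNReal.toReal_mul, ENNReal.toReal_ofReal hc₀]; rfl
      _ ≤ c * μ.real s := by gcongr
  linarith [le_measureReal_sdiff (μ := μ) (s₁ := s) (s₂ := closedBall x (c * r))
    measure_closedBall_lt_top.ne]

section GasRegion

variable {E : Type*} [NormedAddCommGroup E] {Db : Set E} {xh : E} {R y' : ℝ}

theorem gasRegion_subset_prod_Ioi : gasRegion Db xh R y' ⊆ Db ×ˢ Ioi 0 :=
  fun _ hp => ⟨hp.1, hp.2.1⟩

theorem measurableSet_gasRegion [MeasurableSpace E] [BorelSpace E] (hDb : MeasurableSet Db) :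
    MeasurableSet (gasRegion Db xh R y') :=
  (measurable_fst hDb).inter ((measurable_snd measurableSet_Ioi).inter
    (measurableSet_lt measurable_const
      (by fun_prop : Measurable fun p : E × ℝ => ‖p.1 - xh‖ ^ 2 + (p.2 - y') ^ 2)))

theorem prod_Ioi_subset_gasRegion (hR : 0 ≤ R) (hy' : 0 ≤ y') :
    Db ×ˢ Ioi (y' + R) ⊆ gasRegion Db xh R y' := by
  rintro ⟨x, y⟩ ⟨hx, hy : y' + R < y⟩
  refine ⟨hx, by linarith, ?_⟩
  nlinarith [sq_nonneg ‖x - xh‖]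

-- `(7/8)^2 + (1/2)^2 > 1`, and heights below `y'/2` are at distance more than `R/2` from `y'`.
theorem prod_Ioo_subset_gasRegion (hR : 0 ≤ R) (hy' : R ≤ y') :
    (Db \ closedBall xh (7 / 8 * R)) ×ˢ Ioo 0 (y' / 2) ⊆ gasRegion Db xh R y' := by
  rintro ⟨x, y⟩ ⟨⟨hx, hxB⟩, hy₀, hy⟩
  have hxB : 7 / 8 * R < ‖x - xh‖ := by simpa [dist_eq_norm] using hxB
  refine ⟨hx, hy₀, ?_⟩
  nlinarith

end GasRegion

section GasMass

variable {d : ℕ} {Db : Set (EuclideanSpace ℝ (Fin (d - 1)))} {xh : EuclideanSpace ℝ (Fin (d - 1))}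
  {R y' γ : ℝ}

theorem setIntegral_le_gasMass (hγ : 0 < γ) (hDb : volume Db ≠ ⊤)
    {T : Set (EuclideanSpace ℝ (Fin (d - 1)) × ℝ)} (hT : T ⊆ gasRegion Db xh R y') :
    ∫ p in T, γ * exp (-γ * p.2) ≤ gasMass d Db xh R y' γ :=
  setIntegral_mul_exp_neg_mul_mono_set hγ hDb hT gasRegion_subset_prod_Ioi

theorem measureReal_mul_exp_le_gasMass (hγ : 0 < γ) (hDb : volume Db ≠ ⊤) (hR : 0 ≤ R)
    (hy' : 0 ≤ y') : volume.real Db * exp (-γ * (y' + R)) ≤ gasMass d Db xh R y' γ :=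
  calc volume.real Db * exp (-γ * (y' + R))
      = ∫ p in Db ×ˢ Ioi (y' + R), γ * exp (-γ * p.2) := by
        rw [setIntegral_prod_comp_snd Db _ fun y => γ * exp (-γ * y),
          integral_Ioi_mul_exp_neg_mul hγ]
    _ ≤ gasMass d Db xh R y' γ := setIntegral_le_gasMass hγ hDb (prod_Ioi_subset_gasRegion hR hy')

theorem measureReal_sdiff_mul_le_gasMass (hγ : 0 < γ) (hDb : volume Db ≠ ⊤) (hR : 0 ≤ R)
    (hy' : R ≤ y') :
    volume.real (Db \ closedBall xh (7 / 8 * R)) * (1 - exp (-γ * (y' / 2)))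
      ≤ gasMass d Db xh R y' γ :=
  calc volume.real (Db \ closedBall xh (7 / 8 * R)) * (1 - exp (-γ * (y' / 2)))
      = ∫ p in (Db \ closedBall xh (7 / 8 * R)) ×ˢ Ioo 0 (y' / 2), γ * exp (-γ * p.2) := by
        rw [setIntegral_prod_comp_snd _ _ fun y => γ * exp (-γ * y),
          integral_Ioo_mul_exp_neg_mul (by linarith)]
    _ ≤ gasMass d Db xh R y' γ := setIntegral_le_gasMass hγ hDb (prod_Ioo_subset_gasRegion hR hy')

theorem le_gasMass (hd : 2 ≤ d) (hγ : 0 < γ) (hDb : volume Db ≠ ⊤) (hR : 0 ≤ R)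
    (hball : ball xh R ⊆ Db) (hy' : R ≤ y') :
    (1 - exp (-(1 / 2))) / 8 * volume.real Db ≤ gasMass d Db xh R y' γ := by
  have : Nonempty (Fin (d - 1)) := ⟨⟨0, by omega⟩⟩
  rcases le_total (γ * y') 1 with hsmall | hlarge
  · have hexp : exp (-2) ≤ exp (-γ * (y' + R)) := exp_le_exp.2 (by nlinarith)
    have hconst : (1 - exp (-(1 / 2))) / 8 ≤ exp (-2) := by
      linarith [one_sub_le_exp_neg (1 / 2 : ℝ), one_div_sixteen_le_exp_neg_two]
    calc (1 - exp (-(1 / 2))) / 8 * volume.real Db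
        ≤ volume.real Db * exp (-γ * (y' + R)) := by
          nlinarith [measureReal_nonneg (μ := volume) (s := Db)]
      _ ≤ gasMass d Db xh R y' γ := measureReal_mul_exp_le_gasMass hγ hDb hR (hR.trans hy')
  · have hW := volume.mul_measureReal_le_measureReal_sdiff_closedBall hDb (c := 7 / 8)
      (by norm_num) (by norm_num) hR hball
    have hexp : exp (-γ * (y' / 2)) ≤ exp (-(1 / 2)) := exp_le_exp.2 (by nlinarith)
    calc (1 - exp (-(1 / 2))) / 8 * volume.real Db
        = (1 - 7 / 8) * volume.real Db * (1 - exp (-(1 / 2))) := by ring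
      _ ≤ volume.real (Db \ closedBall xh (7 / 8 * R)) * (1 - exp (-γ * (y' / 2))) :=
          mul_le_mul hW (by linarith) (by linarith [exp_neg_half_le]) measureReal_nonneg
      _ ≤ gasMass d Db xh R y' γ := measureReal_sdiff_mul_le_gasMass hγ hDb hR hy'

theorem mul_gasMeanHeight_le (hγ : 0 < γ) (hDb : volume Db ≠ ⊤) :
    γ * gasMeanHeight d Db xh R y' γ ≤ volume.real Db / gasMass d Db xh R y' γ := by
  rw [gasMeanHeight, mul_div_assoc']
  exact div_le_div_of_nonneg_right (mul_setIntegral_snd_mul_le hγ hDb gasRegion_subset_prod_Ioi)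
    (integral_nonneg fun _ => by positivity)

theorem le_mul_gasMeanHeight (hγ : 0 < γ) (hDb : MeasurableSet Db) (hDb' : volume Db ≠ ⊤)
    {κ : ℝ} (hκ : 0 < κ) (hmass : κ * volume.real Db ≤ gasMass d Db xh R y' γ)
    (hmass₀ : 0 < gasMass d Db xh R y' γ) :
    κ / 4 ≤ γ * gasMeanHeight d Db xh R y' γ := by
  have hmean := mul_sub_le_mul_setIntegral_snd_mul hγ hDb' (measurableSet_gasRegion hDb)
    (gasRegion_subset_prod_Ioi (xh := xh) (R := R) (y' := y')) (t := κ / 2) (by positivity)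
  change κ / 2 * (gasMass d Db xh R y' γ - _) ≤ _ at hmean
  rw [gasMeanHeight, mul_div_assoc', le_div_iff₀ hmass₀]
  nlinarith [mul_le_mul_of_nonneg_left hmass hκ.le]

end GasMass

/-- `1/200 ≤ γ·u(γ,y') ≤ 8/(1−e^{-1/2}) < 21`. -/
theorem archimedes_mean_height_bounds (d : ℕ) (hd : 2 ≤ d)
    (Db : Set (EuclideanSpace ℝ (Fin (d - 1)))) (hDb : MeasurableSet Db)
    (hDbb : Bornology.IsBounded Db) (hDbpos : 0 < volume Db)
    (R : ℝ) (hR : 0 < R) (xh : EuclideanSpace ℝ (Fin (d - 1)))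
    (hball : Metric.ball xh R ⊆ Db)
    (γ y' : ℝ) (hγ : 0 < γ) (hy' : R ≤ y') :
    1 / 200 ≤ γ * gasMeanHeight d Db xh R y' γ
      ∧ γ * gasMeanHeight d Db xh R y' γ ≤ 8 / (1 - exp (-(1 / 2)))
      ∧ 8 / (1 - exp (-(1 / 2))) < 21 := by
  have hDb' : volume Db ≠ ⊤ := hDbb.measure_lt_top.ne
  have hV : 0 < volume.real Db := ENNReal.toReal_pos hDbpos.ne' hDb'
  have hκ : 1 / 3 ≤ 1 - exp (-(1 / 2)) := by linarith [exp_neg_half_le]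
  have hmass := le_gasMass hd hγ hDb' hR.le hball hy'
  have hmass₀ : 0 < gasMass d Db xh R y' γ := lt_of_lt_of_le (by positivity) hmass
  refine ⟨?_, ?_, ?_⟩
  · calc (1 : ℝ) / 200 ≤ (1 - exp (-(1 / 2))) / 8 / 4 := by linarith
      _ ≤ γ * gasMeanHeight d Db xh R y' γ :=
          le_mul_gasMeanHeight hγ hDb hDb' (by positivity) hmass hmass₀
  · calc γ * gasMeanHeight d Db xh R y' γ ≤ volume.real Db / gasMass d Db xh R y' γ :=
          mul_gasMeanHeight_le hγ hDb'
      _ ≤ volume.real Db / ((1 - exp (-(1 / 2))) / 8 * volume.real Db) := by gcongr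
      _ = 8 / (1 - exp (-(1 / 2))) := by field_simp
  · rw [div_lt_iff₀ (by linarith)]
    linarith [exp_neg_half_lt]
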